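/- arXiv:0806.1327 — 2 statements merged into one kernel-verified Lean document; each statement's English description precedes it below -/
import Mathlib

section
/- For every natural number n > 1, the Cesàro means (1/N) ∑_{m=1}^{N} ∏_{p prime, p ∣ m} (1 − 1/p^{n-1}) converge, as N → ∞, to 1/ζ(n), where ζ is the Riemann zeta function. -/
/-!
Expanding the product, `∏_{p ∣ m} (1 - p^{-k}) = ∑_{d ∣ m} μ(d) d^{-k}` with `k = n - 1`.
Summing over `m ≤ N` and exchanging the sums, each `d` is counted `⌊N/d⌋` times, so the mean is
`∑_d μ(d) d^{-k} ⌊N/d⌋/N`. As `⌊N/d⌋/N ≤ 1/d` and `⌊N/d⌋/N → 1/d`, dominated convergence with the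
summable majorant `d^{-n}` gives the limit `∑_d μ(d) d^{-n} = 1/ζ(n)`.
-/

open Filter Finset Topology
open scoped ArithmeticFunction.Moebius ArithmeticFunction.zeta LSeries.notation

namespace ArithmeticFunction

theorem IsMultiplicative.prodPrimeFactors_one_sub {R : Type*} [CommRing R]
    {f : ArithmeticFunction R} (hf : f.IsMultiplicative) {m : ℕ} (hm : m ≠ 0) :
    ∏ p ∈ m.primeFactors, (1 - f p) = ∑ d ∈ m.divisors, μ d * f d := by
  -- pass to the radical of `m`, whose divisors are the squarefree divisors of `m`
  open UniqueFactorizationMonoid in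
  rw [← Nat.primeFactors_radical, hf.prodPrimeFactors_one_sub_of_squarefree _ squarefree_radical]
  refine sum_subset (Nat.divisors_subset_of_dvd hm radical_dvd_self) fun d hd hdr => ?_
  rw [moebius_eq_zero_of_not_squarefree, Int.cast_zero, zero_mul]
  intro hsq
  exact hdr (Nat.mem_divisors.2
    ⟨(dvd_radical_iff hsq.isRadical hm).2 (Nat.dvd_of_mem_divisors hd), radical_ne_zero⟩)

theorem prod_primeFactors_one_sub_one_div_pow {K : Type*} [Field K] (k : ℕ) {m : ℕ}
    (hm : m ≠ 0) :
    ∏ p ∈ m.primeFactors, (1 - 1 / (p : K) ^ k) = ∑ d ∈ m.divisors, μ d / (d : K) ^ k := by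
  have hf : (pdiv ↑ζ ↑(pow k) : ArithmeticFunction K).IsMultiplicative :=
    isMultiplicative_zeta.natCast.pdiv isMultiplicative_pow.natCast
  have hf_apply {d : ℕ} (hd : d ≠ 0) :
      (pdiv ↑ζ ↑(pow k) : ArithmeticFunction K) d = 1 / (d : K) ^ k := by
    simp [hd]
  rw [prod_congr rfl fun p hp => by rw [← hf_apply (Nat.prime_of_mem_primeFactors hp).ne_zero],
    hf.prodPrimeFactors_one_sub hm]
  exact sum_congr rfl fun d hd => by rw [hf_apply (Nat.pos_of_mem_divisors hd).ne', mul_one_div]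

theorem _root_.Nat.sum_Ioc_sum_divisors_eq_sum_mul_div {R : Type*} [Semiring R] (f : ℕ → R)
    (N : ℕ) :
    ∑ m ∈ Ioc 0 N, ∑ d ∈ m.divisors, f d = ∑ d ∈ Ioc 0 N, f d * (N / d : ℕ) := by
  have hf {d : ℕ} (hd : d ≠ 0) : toArithmeticFunction f d = f d := by
    simp [toArithmeticFunction, hd]
  calc ∑ m ∈ Ioc 0 N, ∑ d ∈ m.divisors, f d
      = ∑ m ∈ Ioc 0 N, (toArithmeticFunction f * ζ) m := sum_congr rfl fun m _ => by
        rw [coe_mul_zeta_apply]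
        exact sum_congr rfl fun d hd => (hf (Nat.pos_of_mem_divisors hd).ne').symm
    _ = ∑ d ∈ Ioc 0 N, f d * (N / d : ℕ) := by
        rw [sum_Ioc_mul_zeta_eq_sum]
        exact sum_congr rfl fun d hd => by rw [hf (mem_Ioc.1 hd).1.ne']

end ArithmeticFunction

lemma natCast_div_div_le_inv (N d : ℕ) : ((N / d : ℕ) : ℝ) / N ≤ (d : ℝ)⁻¹ := by
  rcases eq_or_ne N 0 with rfl | hN
  · simp
  calc ((N / d : ℕ) : ℝ) / N ≤ (N / d : ℝ) / N := by gcongr; exact Nat.cast_div_le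
    _ = (d : ℝ)⁻¹ := by field_simp

lemma tendsto_natCast_div_div_atTop (d : ℕ) :
    Tendsto (fun N : ℕ => ((N / d : ℕ) : ℝ) / N) atTop (𝓝 (d : ℝ)⁻¹) := by
  refine ((tendsto_nat_floor_mul_div_atTop (inv_nonneg.2 d.cast_nonneg)).comp
    tendsto_natCast_atTop_atTop).congr fun N => ?_
  simp [← div_eq_inv_mul, Nat.floor_div_eq_div]

theorem tendsto_mean_sum_divisors {𝕜 : Type*} [RCLike 𝕜] (f : ℕ → 𝕜)
    (hf : Summable fun d => ‖f d‖ / d) :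
    Tendsto (fun N : ℕ => (N : 𝕜)⁻¹ * ∑ m ∈ Ioc 0 N, ∑ d ∈ m.divisors, f d) atTop
      (𝓝 (∑' d, f d / d)) := by
  have hmean (N : ℕ) : (N : 𝕜)⁻¹ * ∑ m ∈ Ioc 0 N, ∑ d ∈ m.divisors, f d =
      ∑' d, f d * (((N / d : ℕ) : ℝ) / N : ℝ) := by
    rw [Nat.sum_Ioc_sum_divisors_eq_sum_mul_div, mul_sum, tsum_eq_sum (s := Ioc 0 N)]
    · refine sum_congr rfl fun d _ => ?_
      push_cast
      ring
    · -- outside `Ioc 0 N` the quotient `N / d` vanishes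
      intro d hd
      rw [mem_Ioc, not_and_or, not_lt, nonpos_iff_eq_zero, not_le] at hd
      rcases hd with rfl | hd <;> simp [Nat.div_eq_of_lt, *]
  simp_rw [hmean]
  refine tendsto_tsum_of_dominated_convergence hf (fun d => ?_) (.of_forall fun N d => ?_)
  · have := ((RCLike.continuous_ofReal (K := 𝕜)).tendsto _).comp (tendsto_natCast_div_div_atTop d)
    simpa [div_eq_mul_inv] using this.const_mul (f d)
  · rw [norm_mul, RCLike.norm_ofReal, abs_of_nonneg (by positivity)]
    exact mul_le_mul_of_nonneg_left (natCast_div_div_le_inv N d) (norm_nonneg _)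

theorem LSeries_moebius_eq_one_div_riemannZeta {s : ℂ} (hs : 1 < s.re) :
    L ↗μ s = 1 / riemannZeta s := by
  rw [← LSeries_one_eq_riemannZeta hs]
  exact eq_one_div_of_mul_eq_one_right (LSeries_one_mul_Lseries_moebius hs)

theorem cesaro_euler_like_minus_nat (n : ℕ) (hn : 1 < n) :
    Tendsto (fun N : ℕ =>
        (1 / (N : ℂ)) * ∑ m ∈ Finset.Icc 1 N,
          ∏ p ∈ m.primeFactors, (1 - 1 / (p : ℂ) ^ (n - 1)))
      atTop (nhds (1 / riemannZeta n)) := by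
  set g : ℕ → ℂ := fun d => μ d / (d : ℂ) ^ (n - 1)
  have hterm : (fun d => g d / d) = LSeries.term ↗μ n := by
    ext d
    rcases eq_or_ne d 0 with rfl | hd
    · simp
    rw [LSeries.term_of_ne_zero hd, Complex.cpow_natCast, div_div, ← pow_succ,
      Nat.sub_add_cancel hn.le]
  have hre : 1 < (n : ℂ).re := by simpa using hn
  have hsum : Summable fun d => ‖g d‖ / d := by
    simpa [← hterm, norm_div] using
      summable_norm_iff.2 (ArithmeticFunction.LSeriesSummable_moebius_iff.2 hre)
  rw [← LSeries_moebius_eq_one_div_riemannZeta hre, LSeries, ← hterm]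
  refine (tendsto_mean_sum_divisors g hsum).congr fun N => ?_
  rw [one_div]
  exact congrArg _ <| sum_congr rfl fun m hm =>
    (ArithmeticFunction.prod_primeFactors_one_sub_one_div_pow _ (mem_Ioc.1 hm).1.ne').symm
end

section
/- Let χ be a Dirichlet character and s a complex number with real part greater than 1. Then the Cesàro means (1/N) ∑_{m=1}^{N} ∏_{p prime, p ∣ m} (1 + χ(p)/p^{s-1}) converge, as N → ∞, to L(χ, s)/L(χ², 2s), where L(·, ·) denotes the Dirichlet L-series and χ² is the square of the character χ. -/
/-!
By multiplicativity, `∏_{p ∣ m} (1 + χ(p) p^{1-s}) = ∑_{d ∣ m} d g(d)` with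
`g(d) = μ(d)² χ(d) d^{-s}`, so the `N`-th Cesàro mean is `∑_{d ≤ N} (⌊N/d⌋ d / N) g(d)`.
The weights lie in `[0, 1]` and tend to `1`, and `g` is absolutely summable, so by dominated
convergence the means tend to `∑ g(d)`. Comparing Euler factors,
`(1 + x) (1 - x²)⁻¹ = (1 - x)⁻¹` with `x = χ(p) p^{-s}`, identifies this sum as
`L(χ, s) / L(χ², 2s)`.
-/

open Filter Finset Topology

theorem Nat.prod_primeFactors_one_add {R F : Type*} [CommSemiring R] [FunLike F ℕ R]
    [MonoidHomClass F ℕ R] (f : F) {m : ℕ} (hm : m ≠ 0) :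
    ∏ p ∈ m.primeFactors, (1 + f p) = ∑ d ∈ m.divisors with Squarefree d, f d := by
  rw [prod_one_add, Nat.sum_divisors_filter_squarefree hm, Nat.factors_eq]
  exact sum_congr rfl fun t _ ↦ by rw [t.prod_val, map_prod]; rfl

theorem Nat.sum_Icc_sum_divisors {R : Type*} [Semiring R] (g : ℕ → R) (N : ℕ) :
    ∑ m ∈ Icc 1 N, ∑ d ∈ m.divisors, g d = ∑ d ∈ Icc 1 N, g d * (N / d : ℕ) := by
  let G : ArithmeticFunction R := ⟨fun d ↦ if d = 0 then 0 else g d, if_pos rfl⟩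
  have hG {d : ℕ} (hd : d ≠ 0) : G d = g d := if_neg hd
  have key := ArithmeticFunction.sum_Ioc_mul_zeta_eq_sum G N
  rw [← Icc_add_one_left_eq_Ioc, zero_add] at key
  convert key using 2 with m _ d hd
  · rw [ArithmeticFunction.coe_mul_zeta_apply]
    exact sum_congr rfl fun d hd ↦ (hG (Nat.ne_of_gt (Nat.pos_of_mem_divisors hd))).symm
  · rw [hG (by grind)]

theorem Nat.Prime.tsum_ite_squarefree_pow {α : Type*} [AddCommMonoid α] [TopologicalSpace α]
    {p : ℕ} (hp : p.Prime) (g : ℕ → α) :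
    ∑' e, (if Squarefree (p ^ e) then g (p ^ e) else 0) = g 1 + g p := by
  rw [tsum_eq_sum (s := {0, 1}), sum_pair zero_ne_one]
  · simp [hp.squarefree]
  · intro e he
    simp only [mem_insert, mem_singleton, not_or] at he
    rw [if_neg (by simp [Nat.squarefree_pow_iff hp.ne_one he.1, he.2])]

theorem tendsto_natCast_div_mul_div_self {d : ℕ} (hd : d ≠ 0) :
    Tendsto (fun N : ℕ ↦ ((N / d * d : ℕ) : ℝ) / N) atTop (𝓝 1) := by
  have hd' : (0 : ℝ) < d := Nat.cast_pos.mpr (Nat.pos_of_ne_zero hd)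
  refine (tendsto_nat_floor_div_atTop.comp
    (tendsto_natCast_atTop_atTop.atTop_div_const hd')).congr fun N ↦ ?_
  rw [Function.comp_apply, Nat.floor_div_eq_div, div_div_eq_mul_div, Nat.cast_mul]

theorem tendsto_mean_sum_divisors_natCast_mul {𝕜 : Type*} [RCLike 𝕜] {f : ℕ → 𝕜}
    (hf : Summable (‖f ·‖)) (hf0 : f 0 = 0) :
    Tendsto (fun N : ℕ ↦ 1 / (N : 𝕜) * ∑ m ∈ Icc 1 N, ∑ d ∈ m.divisors, (d : 𝕜) * f d)
      atTop (𝓝 (∑' d, f d)) := by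
  set c : ℕ → ℕ → ℝ := fun N d ↦ ((N / d * d : ℕ) : ℝ) / N
  have hc_nonneg (N d : ℕ) : 0 ≤ c N d := by positivity
  have hc_le_one (N d : ℕ) : c N d ≤ 1 :=
    div_le_one_of_le₀ (Nat.cast_le.mpr (Nat.div_mul_le_self N d)) N.cast_nonneg
  have hmean (N : ℕ) : 1 / (N : 𝕜) * ∑ m ∈ Icc 1 N, ∑ d ∈ m.divisors, (d : 𝕜) * f d =
      ∑' d, (c N d : 𝕜) * f d := by
    rw [Nat.sum_Icc_sum_divisors, mul_sum, tsum_eq_sum (s := Icc 1 N)]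
    · refine sum_congr rfl fun d _ ↦ ?_
      simp only [c]
      push_cast
      ring
    · intro d hd
      rcases Nat.eq_zero_or_pos d with rfl | hd0
      · rw [hf0, mul_zero]
      · have : N / d = 0 := Nat.div_eq_of_lt (by simp only [mem_Icc, not_and_or] at hd; omega)
        simp [c, this]
  simp_rw [hmean]
  refine tendsto_tsum_of_dominated_convergence hf (fun d ↦ ?_)
    (Eventually.of_forall fun N d ↦ ?_)
  · rcases eq_or_ne d 0 with rfl | hd
    · simp [hf0]
    · simpa [c] using ((RCLike.continuous_ofReal.tendsto 1).comp
        (tendsto_natCast_div_mul_div_self hd)).mul_const (f d)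
  · rw [norm_mul, RCLike.norm_ofReal, abs_of_nonneg (hc_nonneg N d)]
    exact mul_le_of_le_one_left (norm_nonneg _) (hc_le_one N d)

theorem tsum_ite_squarefree_mul_tsum_sq {F : Type*} [NormedField F] [CompleteSpace F]
    {f : ℕ →*₀ F} (hf : Summable (‖f ·‖)) :
    (∑' n, if Squarefree n then f n else 0) * ∑' n, f (n ^ 2) = ∑' n, f n := by
  have hsqf := EulerProduct.eulerProduct_hasProd (f := fun n ↦ if Squarefree n then f n else 0)
    (by simp) (fun {m n} hmn ↦ ?multiplicative)
    (hf.of_nonneg_of_le (fun _ ↦ norm_nonneg _) fun n ↦ ?bound) (by simp)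
  · have hsq : HasProd (fun p : Nat.Primes ↦ (1 - f p ^ 2)⁻¹) (∑' n, f (n ^ 2)) := by
      simpa using EulerProduct.eulerProduct_completely_multiplicative_hasProd
        (f := f.comp (powMonoidWithZeroHom two_ne_zero))
        (hf.comp_injective (Nat.pow_left_injective two_ne_zero))
    refine HasProd.unique ?_ (EulerProduct.eulerProduct_completely_multiplicative_hasProd hf)
    convert hsqf.mul hsq using 1
    funext p
    have hp : ‖f p‖ < 1 := (hf.of_norm (f := (f : ℕ →* F))).norm_lt_one p.prop.one_lt
    have hplus : 1 + f p ≠ 0 := fun h ↦ by simp [eq_neg_of_add_eq_zero_right h] at hp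
    have hminus : 1 - f p ≠ 0 := fun h ↦ by simp [← sub_eq_zero.mp h] at hp
    rw [p.prop.tsum_ite_squarefree_pow, map_one,
      show 1 - f p ^ 2 = (1 - f p) * (1 + f p) by ring]
    field_simp
  case multiplicative =>
    simp only [Nat.squarefree_mul hmn, map_mul]
    split_ifs <;> simp_all
  case bound =>
    split_ifs <;> simp

namespace DirichletCharacter

variable {N : ℕ} (χ : DirichletCharacter ℂ N) {s : ℂ}

theorem tsum_ite_squarefree_mul_cpow_neg (hs : 1 < s.re) :
    ∑' n : ℕ, (if Squarefree n then χ n * (n : ℂ) ^ (-s) else 0) =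
      LSeries (fun n ↦ χ n) s / LSeries (fun n ↦ (χ ^ 2) n) (2 * s) := by
  have hs2 : 1 < (2 * s).re := by
    rw [Complex.mul_re, Complex.re_ofNat, Complex.im_ofNat, zero_mul, sub_zero]; linarith
  rw [eq_div_iff ((χ ^ 2).LSeries_ne_zero_of_one_lt_re hs2), ← tsum_dirichletSummand χ hs,
    ← tsum_dirichletSummand (χ ^ 2) hs2,
    ← tsum_ite_squarefree_mul_tsum_sq (summable_dirichletSummand χ hs)]
  congr 2 with n
  rw [map_pow]
  simp only [dirichletSummandHom, MonoidWithZeroHom.coe_mk, ZeroHom.coe_mk]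
  rw [MulChar.pow_apply' χ two_ne_zero, neg_mul_eq_mul_neg, Complex.cpow_ofNat_mul]
  ring

theorem prod_primeFactors_one_add_div_cpow (hs : s ≠ 1) {m : ℕ} (hm : m ≠ 0) :
    ∏ p ∈ m.primeFactors, (1 + χ p / (p : ℂ) ^ (s - 1)) =
      ∑ d ∈ m.divisors, (d : ℂ) * (if Squarefree d then χ d * (d : ℂ) ^ (-s) else 0) := by
  have key := Nat.prod_primeFactors_one_add (dirichletSummandHom χ (sub_ne_zero.mpr hs)) hm
  simp only [dirichletSummandHom, MonoidWithZeroHom.coe_mk, ZeroHom.coe_mk] at key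
  rw [sum_filter] at key
  convert key using 2 with p _ d hd
  · rw [div_eq_mul_inv, Complex.cpow_neg]
  · have hd0 : (d : ℂ) ≠ 0 := Nat.cast_ne_zero.mpr (Nat.ne_of_gt (Nat.pos_of_mem_divisors hd))
    split_ifs
    · rw [neg_sub, Complex.cpow_sub _ _ hd0, Complex.cpow_one, Complex.cpow_neg]
      field_simp
    · rw [mul_zero]

end DirichletCharacter

theorem cesaro_dirichlet_plus_general (n : ℕ) (χ : DirichletCharacter ℂ n)
    (s : ℂ) (hs : 1 < s.re) :
    Tendsto (fun N : ℕ =>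
        (1 / (N : ℂ)) * ∑ m ∈ Finset.Icc 1 N,
          ∏ p ∈ m.primeFactors, (1 + χ p / (p : ℂ) ^ (s - 1)))
      atTop (nhds (LSeries (fun m : ℕ => χ m) s /
        LSeries (fun m : ℕ => (χ ^ 2) m) (2 * s))) := by
  have hs1 : s ≠ 1 := fun h ↦ by simp [h] at hs
  have hsum : Summable fun d : ℕ ↦ ‖if Squarefree d then χ d * (d : ℂ) ^ (-s) else 0‖ :=
    (summable_dirichletSummand χ hs).of_nonneg_of_le (fun _ ↦ norm_nonneg _)
      fun d ↦ by split_ifs <;> simp [dirichletSummandHom]; positivity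
  rw [← χ.tsum_ite_squarefree_mul_cpow_neg hs]
  refine (tendsto_mean_sum_divisors_natCast_mul hsum (by simp)).congr fun N ↦ ?_
  congr 1
  refine sum_congr rfl fun m hm ↦ (χ.prod_primeFactors_one_add_div_cpow hs1 ?_).symm
  exact Nat.ne_of_gt (mem_Icc.mp hm).1

theorem cesaro_dirichlet_plus (n : ℕ) [NeZero n] (χ : DirichletCharacter ℂ n)
    (s : ℂ) (hs : 1 < s.re) :
    Tendsto (fun N : ℕ =>
        (1 / (N : ℂ)) * ∑ m ∈ Finset.Icc 1 N,
          ∏ p ∈ m.primeFactors, (1 + χ p / (p : ℂ) ^ (s - 1)))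
      atTop (nhds (LSeries (fun m : ℕ => χ m) s /
        LSeries (fun m : ℕ => (χ ^ 2) m) (2 * s))) :=
  cesaro_dirichlet_plus_general n χ s hs
end
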